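/- Let d ≥ 1 and let (x,z) ∈ B_d = {0,…,2^d−1}². Then min(2, M) = E1[d](x,z), where M is the number of integers a with 0 < a < 2^d such that w(x,a) and w(2^d−a,z) are both Ulam words. -/

import Mathlib

/-- Fuel-indexed Ulam predicate: a binary word (as a `List Bool`) of length 1 is Ulam,
and a longer word is Ulam iff it is expressible *uniquely* as a concatenation of two
distinct (nonempty) Ulam words. The fuel strictly exceeds the lengths needed. -/
def ulamAux : ℕ → List Bool → Prop
  | 0, _ => False
  | n + 1, w =>
    if w.length = 1 then True
    else ∃! p : List Bool × List Bool,
      p.1 ≠ [] ∧ p.2 ≠ [] ∧ p.1 ≠ p.2 ∧ w = p.1 ++ p.2 ∧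
        ulamAux n p.1 ∧ ulamAux n p.2

/-- A binary word is an Ulam word. -/
def IsUlam (w : List Bool) : Prop := ulamAux w.length w

/-- The word `0^x 1 0^y`. -/
def wordTwo (x y : ℕ) : List Bool :=
  List.replicate x false ++ [true] ++ List.replicate y false

/-- The word `0^x 1 0^y 1 0^z`. -/
def wordThree (x y z : ℕ) : List Bool :=
  List.replicate x false ++ [true] ++ List.replicate y false ++ [true] ++
    List.replicate z false

/-- `UlamSet y` is the set of pairs `(x,z)` such that `0^x 1 0^y 1 0^z` is Ulam. -/
def UlamSet (y : ℕ) : Set (ℕ × ℕ) := {p | IsUlam (wordThree p.1 y p.2)}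

/-- `culam y x z = min(2, N)` where `N` counts `0 ≤ a ≤ y` with both
`w(x,a)` and `w(y-a,z)` Ulam. -/
noncomputable def culam (y x z : ℕ) : ℕ :=
  min 2 {a : ℕ | a ≤ y ∧ IsUlam (wordTwo x a) ∧ IsUlam (wordTwo (y - a) z)}.ncard

/-- A positive integer is Zumkeller if its binary representation has at most one `0`. -/
def IsZumkeller (y : ℕ) : Prop := 0 < y ∧ (Nat.bits y).count false ≤ 1

/-- The largest `e ≤ d - 1` with `x mod 2^(e+1) < 2^e` and `z mod 2^(e+1) < 2^e`
(and `0` if none exists). -/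
def eIdx (d x z : ℕ) : ℕ :=
  Nat.findGreatest (fun e => x % 2 ^ (e + 1) < 2 ^ e ∧ z % 2 ^ (e + 1) < 2 ^ e) (d - 1)

/-- The universal pattern `E1[d]` on `B_d`. -/
def E1 (d x z : ℕ) : ℕ :=
  if 2 ^ d - 1 ≤ x + z then 0
  else if x % 2 ^ eIdx d x z + z % 2 ^ eIdx d x z < 2 ^ eIdx d x z - 1 then 2 else 1

/-- The universal pattern `E2[d]` on `B_d` (constant `1`). -/
def E2 (_d _x _z : ℕ) : ℕ := 1

/-- The universal pattern `O1[d]` on `B_d`. -/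
def O1 (d x z : ℕ) : ℕ :=
  if 2 ^ d - 2 ≤ x + z then 0
  else if (x + z) % 2 = 0 then (if x % 2 = 1 then 0 else 2)
  else if x % 2 ^ eIdx d x z + z % 2 ^ eIdx d x z < 2 ^ eIdx d x z - 1 then 2 else 1

/-- The universal pattern `O2[d]` on `B_d` (independent of `d`). -/
def O2 (_d x z : ℕ) : ℕ :=
  if (x + z) % 2 = 0 then (if x % 2 = 1 then 0 else 2) else 1

-- ===== auxiliary development =====

lemma ulamAux_congr (k : ℕ) : ∀ (w : List Bool), w.length ≤ k → ∀ m n, w.length ≤ m →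
    w.length ≤ n → 1 ≤ w.length → (ulamAux m w ↔ ulamAux n w) := by
  induction k with
  | zero => intro w hw m n _ _ h1; omega
  | succ k ih =>
    intro w hw m n hm hn h1
    obtain ⟨m, rfl⟩ : ∃ m', m = m' + 1 := ⟨m - 1, by omega⟩
    obtain ⟨n, rfl⟩ : ∃ n', n = n' + 1 := ⟨n - 1, by omega⟩
    show ulamAux (m+1) w ↔ ulamAux (n+1) w
    simp only [ulamAux]
    by_cases hl : w.length = 1
    · simp [hl]
    · rw [if_neg hl, if_neg hl]
      apply existsUnique_congr
      rintro ⟨u, v⟩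
      dsimp only
      constructor
      · rintro ⟨hu, hv, huv, rfl, pu, pv⟩
        have lu : 1 ≤ u.length := List.length_pos_iff.mpr hu
        have lv : 1 ≤ v.length := List.length_pos_iff.mpr hv
        have hlen : u.length + v.length ≤ k + 1 := by simpa using hw
        exact ⟨hu, hv, huv, rfl, (ih u (by omega) m n (by simp at hm; omega)
          (by simp at hn; omega) lu).mp pu,
          (ih v (by omega) m n (by simp at hm; omega) (by simp at hn; omega) lv).mp pv⟩
      · rintro ⟨hu, hv, huv, rfl, pu, pv⟩
        have lu : 1 ≤ u.length := List.length_pos_iff.mpr hu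
        have lv : 1 ≤ v.length := List.length_pos_iff.mpr hv
        have hlen : u.length + v.length ≤ k + 1 := by simpa using hw
        exact ⟨hu, hv, huv, rfl, (ih u (by omega) m n (by simp at hm; omega)
          (by simp at hn; omega) lu).mpr pu,
          (ih v (by omega) m n (by simp at hm; omega) (by simp at hn; omega) lv).mpr pv⟩

lemma isUlam_iff_aux {w : List Bool} {n : ℕ} (h1 : 1 ≤ w.length) (hn : w.length ≤ n) :
    IsUlam w ↔ ulamAux n w :=
  ulamAux_congr w.length w le_rfl _ _ le_rfl hn h1

lemma isUlam_split {w : List Bool} (h2 : 2 ≤ w.length) :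
    IsUlam w ↔ ∃! p : List Bool × List Bool,
      p.1 ≠ [] ∧ p.2 ≠ [] ∧ p.1 ≠ p.2 ∧ w = p.1 ++ p.2 ∧ IsUlam p.1 ∧ IsUlam p.2 := by
  rw [IsUlam]
  obtain ⟨m, hm⟩ : ∃ m', w.length = m' + 1 := ⟨w.length - 1, by omega⟩
  rw [hm]
  simp only [ulamAux]
  rw [if_neg (by omega)]
  apply existsUnique_congr
  rintro ⟨u, v⟩
  dsimp only
  constructor
  · rintro ⟨hu, hv, huv, rfl, pu, pv⟩
    have lu : 1 ≤ u.length := List.length_pos_iff.mpr hu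
    have lv : 1 ≤ v.length := List.length_pos_iff.mpr hv
    have hlen : u.length + v.length = m + 1 := by simpa using hm
    exact ⟨hu, hv, huv, rfl, (isUlam_iff_aux lu (by omega)).mpr pu,
      (isUlam_iff_aux lv (by omega)).mpr pv⟩
  · rintro ⟨hu, hv, huv, rfl, pu, pv⟩
    have lu : 1 ≤ u.length := List.length_pos_iff.mpr hu
    have lv : 1 ≤ v.length := List.length_pos_iff.mpr hv
    have hlen : u.length + v.length = m + 1 := by simpa using hm
    exact ⟨hu, hv, huv, rfl, (isUlam_iff_aux lu (by omega)).mp pu,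
      (isUlam_iff_aux lv (by omega)).mp pv⟩

lemma eq_replicate_of_append {u v : List Bool} {k : ℕ} (h : u ++ v = List.replicate k false) :
    u = List.replicate u.length false ∧ v = List.replicate v.length false := by
  constructor
  · rw [List.eq_replicate_length]
    intro b hb
    exact List.eq_of_mem_replicate (h ▸ List.mem_append_left v hb)
  · rw [List.eq_replicate_length]
    intro b hb
    exact List.eq_of_mem_replicate (h ▸ List.mem_append_right u hb)

lemma ulam_replicate (k : ℕ) : IsUlam (List.replicate k false) ↔ k = 1 := by
  induction k using Nat.strong_induction_on with
  | _ k ih =>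
    match k with
    | 0 => simp [IsUlam, ulamAux]
    | 1 => simp [IsUlam, ulamAux]
    | (n+2) =>
      rw [iff_false_intro (by omega : ¬ (n + 2 = 1)), iff_false]
      rw [isUlam_split (by simp)]
      rintro ⟨⟨u, v⟩, ⟨hu, hv, huv, he, pu, pv⟩, -⟩
      obtain ⟨h1, h2⟩ := eq_replicate_of_append he.symm
      rw [h1] at pu; rw [h2] at pv
      have e1 : u.length = 1 := (ih u.length (by
        have : u.length + v.length = n + 2 := by simpa using congrArg List.length he.symm
        have : 1 ≤ v.length := List.length_pos_iff.mpr hv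
        omega)).mp pu
      have e2 : v.length = 1 := (ih v.length (by
        have : u.length + v.length = n + 2 := by simpa using congrArg List.length he.symm
        have : 1 ≤ u.length := List.length_pos_iff.mpr hu
        omega)).mp pv
      apply huv
      rw [h1, h2, e1, e2]

lemma wordTwo_count (x a : ℕ) : (wordTwo x a).count true = 1 := by
  simp [wordTwo, List.count_append, List.count_replicate]

lemma wordTwo_ne_replicate (x a : ℕ) (j : ℕ) : wordTwo x a ≠ List.replicate j false := by
  intro h
  have := wordTwo_count x a
  rw [h] at this
  simp [List.count_replicate] at this

lemma wordTwo_length (x a : ℕ) : (wordTwo x a).length = x + a + 1 := by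
  simp [wordTwo]; omega

lemma wordTwo_cons (x a : ℕ) : wordTwo (x+1) a = false :: wordTwo x a := by
  simp [wordTwo, List.replicate_succ]

lemma wordTwo_concat (x a : ℕ) : wordTwo x (a+1) = wordTwo x a ++ [false] := by
  simp [wordTwo, List.replicate_succ']

lemma ulam_false : IsUlam [false] := by simp [IsUlam, ulamAux]

lemma wordTwo_splits (x a : ℕ) (h : 1 ≤ x + a) (u v : List Bool)
    (hu : u ≠ []) (hv : v ≠ []) (he : wordTwo x a = u ++ v)
    (pu : IsUlam u) (pv : IsUlam v) :
    (0 < x ∧ u = [false] ∧ v = wordTwo (x-1) a) ∨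
    (0 < a ∧ u = wordTwo x (a-1) ∧ v = [false]) := by
  have hcnt : u.count true + v.count true = 1 := by
    have := wordTwo_count x a
    rw [he, List.count_append] at this
    omega
  rcases Nat.eq_zero_or_pos (u.count true) with h0 | h0
  · -- u is all false
    left
    have hall : u = List.replicate u.length false := by
      rw [List.eq_replicate_length]
      intro b hb
      cases b
      · rfl
      · exact absurd (List.count_pos_iff.mpr hb) (by omega)
    rw [hall] at pu
    have e1 : u.length = 1 := (ulam_replicate u.length).mp pu
    have hu1 : u = [false] := by rw [hall, e1]; rfl
    obtain ⟨x', rfl⟩ : ∃ x', x = x' + 1 := by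
      rcases Nat.eq_zero_or_pos x with rfl | hx
      · exfalso
        rw [hu1] at he
        have : wordTwo 0 a = true :: List.replicate a false := by
          simp [wordTwo]
        rw [this] at he
        simp at he
      · exact ⟨x - 1, by omega⟩
    rw [wordTwo_cons, hu1] at he
    simp only [List.cons_append, List.nil_append, List.cons.injEq] at he
    exact ⟨by omega, hu1, by simpa using he.2.symm⟩
  · -- v is all false
    right
    have h0' : v.count true = 0 := by omega
    have hall : v = List.replicate v.length false := by
      rw [List.eq_replicate_length]
      intro b hb
      cases b
      · rfl
      · exact absurd (List.count_pos_iff.mpr hb) (by omega)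
    rw [hall] at pv
    have e1 : v.length = 1 := (ulam_replicate v.length).mp pv
    have hv1 : v = [false] := by rw [hall, e1]; rfl
    obtain ⟨a', rfl⟩ : ∃ a', a = a' + 1 := by
      rcases Nat.eq_zero_or_pos a with rfl | ha
      · exfalso
        rw [hv1] at he
        have h2 : wordTwo x 0 = List.replicate x false ++ [true] := by
          simp [wordTwo]
        rw [h2] at he
        have := List.append_inj' he (by rfl)
        simp at this
      · exact ⟨a - 1, by omega⟩
    rw [wordTwo_concat, hv1] at he
    have := List.append_inj' he (by rfl)
    exact ⟨by omega, this.1.symm, hv1⟩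

lemma ulam_wordTwo_rec (x a : ℕ) (h : 1 ≤ x + a) :
    IsUlam (wordTwo x a) ↔
      Xor' (0 < x ∧ IsUlam (wordTwo (x-1) a)) (0 < a ∧ IsUlam (wordTwo x (a-1))) := by
  rw [isUlam_split (by rw [wordTwo_length]; omega)]
  set L := 0 < x ∧ IsUlam (wordTwo (x-1) a) with hL
  set R := 0 < a ∧ IsUlam (wordTwo x (a-1)) with hR
  have key : ∀ p : List Bool × List Bool,
      (p.1 ≠ [] ∧ p.2 ≠ [] ∧ p.1 ≠ p.2 ∧ wordTwo x a = p.1 ++ p.2 ∧ IsUlam p.1 ∧ IsUlam p.2)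
      ↔ ((L ∧ p = ([false], wordTwo (x-1) a)) ∨ (R ∧ p = (wordTwo x (a-1), [false]))) := by
    rintro ⟨u, v⟩
    constructor
    · rintro ⟨hu, hv, huv, he, pu, pv⟩
      rcases wordTwo_splits x a h u v hu hv he pu pv with ⟨hx, h1, h2⟩ | ⟨ha, h1, h2⟩
      · left
        refine ⟨⟨hx, ?_⟩, by rw [h1, h2]⟩
        rw [← h2]; exact pv
      · right
        refine ⟨⟨ha, ?_⟩, by rw [h1, h2]⟩
        rw [← h1]; exact pu
    · rintro (⟨⟨hx, hW⟩, hp⟩ | ⟨⟨ha, hW⟩, hp⟩)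
      · obtain ⟨x', rfl⟩ : ∃ x', x = x' + 1 := ⟨x - 1, by omega⟩
        simp only [Prod.mk.injEq] at hp
        obtain ⟨rfl, rfl⟩ := hp
        refine ⟨by simp, by simp [wordTwo], ?_, ?_, ulam_false, by simpa using hW⟩
        · exact fun hc => wordTwo_ne_replicate _ _ 1 (by simpa using hc.symm)
        · rw [wordTwo_cons]; rfl
      · obtain ⟨a', rfl⟩ : ∃ a', a = a' + 1 := ⟨a - 1, by omega⟩
        simp only [Prod.mk.injEq] at hp
        obtain ⟨rfl, rfl⟩ := hp
        refine ⟨by simp [wordTwo], by simp, ?_, ?_, by simpa using hW, ulam_false⟩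
        · exact fun hc => wordTwo_ne_replicate _ _ 1 (by simpa using hc)
        · rw [wordTwo_concat]; simp
  have hne : ([false], wordTwo (x-1) a) ≠ ((wordTwo x (a-1), [false]) : List Bool × List Bool) := by
    intro hc
    have := congrArg Prod.fst hc
    exact wordTwo_ne_replicate x (a-1) 1 (by simpa using this.symm)
  constructor
  · rintro ⟨p, hp, hun⟩
    rcases (key p).mp hp with ⟨hl, rfl⟩ | ⟨hr, rfl⟩
    · refine Or.inl ⟨hl, fun hr => hne ?_⟩
      exact (hun _ ((key _).mpr (Or.inr ⟨hr, rfl⟩))).symm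
    · refine Or.inr ⟨hr, fun hl => hne ?_⟩
      exact (hun _ ((key _).mpr (Or.inl ⟨hl, rfl⟩)))
  · rintro (⟨hl, hnr⟩ | ⟨hr, hnl⟩)
    · refine ⟨([false], wordTwo (x-1) a), (key _).mpr (Or.inl ⟨hl, rfl⟩), ?_⟩
      intro q hq
      rcases (key q).mp hq with ⟨_, rfl⟩ | ⟨hr, rfl⟩
      · rfl
      · exact absurd hr hnr
    · refine ⟨(wordTwo x (a-1), [false]), (key _).mpr (Or.inr ⟨hr, rfl⟩), ?_⟩
      intro q hq
      rcases (key q).mp hq with ⟨hl, rfl⟩ | ⟨_, rfl⟩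
      · exact absurd hl hnl
      · rfl

lemma ulam_wordTwo_choose (x a : ℕ) : IsUlam (wordTwo x a) ↔ Odd ((x + a).choose x) := by
  suffices H : ∀ n x a, x + a = n → (IsUlam (wordTwo x a) ↔ Odd ((x + a).choose x)) from
    H _ x a rfl
  clear x a
  intro n
  induction n using Nat.strong_induction_on with
  | _ n ih =>
    intro x a hn
    subst hn
    rcases Nat.eq_zero_or_pos (x + a) with h0 | h1
    · obtain ⟨rfl, rfl⟩ : x = 0 ∧ a = 0 := by omega
      constructor
      · intro; simp
      · intro; show ulamAux _ _; simp [wordTwo, ulamAux]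
    · rw [ulam_wordTwo_rec x a h1]
      rcases Nat.eq_zero_or_pos x with rfl | hx
      · have h2 : IsUlam (wordTwo 0 (a-1)) := by
          rw [ih (0 + (a-1)) (by omega) 0 (a-1) rfl]
          simp
        simp only [Nat.choose_zero_right]
        constructor
        · intro _; simp
        · intro _
          exact Or.inr ⟨⟨by omega, h2⟩, fun hc => absurd hc.1 (lt_irrefl 0)⟩
      rcases Nat.eq_zero_or_pos a with rfl | ha
      · have h2 : IsUlam (wordTwo (x-1) 0) := by
          rw [ih ((x-1) + 0) (by omega) (x-1) 0 rfl]
          simp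
        rw [Nat.add_zero, Nat.choose_self]
        constructor
        · intro _; simp
        · intro _
          exact Or.inl ⟨⟨by omega, h2⟩, fun hc => absurd hc.1 (lt_irrefl 0)⟩
      · rw [ih ((x-1) + a) (by omega) (x-1) a rfl, ih (x + (a-1)) (by omega) x (a-1) rfl]
        obtain ⟨x', rfl⟩ : ∃ x', x = x' + 1 := ⟨x - 1, by omega⟩
        obtain ⟨a', rfl⟩ : ∃ a', a = a' + 1 := ⟨a - 1, by omega⟩
        have hp : (x' + 1 + (a' + 1)).choose (x' + 1)
            = (x' + (a' + 1)).choose x' + (x' + (a' + 1)).choose (x' + 1) := by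
          have h9 : x' + 1 + (a' + 1) = (x' + (a' + 1)) + 1 := by omega
          rw [h9, Nat.choose_succ_succ']
        have e1 : x' + 1 - 1 + (a' + 1) = x' + (a' + 1) := by omega
        have e2 : x' + 1 + (a' + 1 - 1) = x' + (a' + 1) := by omega
        have e4 : x' + 1 - 1 = x' := rfl
        rw [e1, e4, e2, hp, Nat.odd_add, ← Nat.not_odd_iff_even]
        have hA : 0 < x' + 1 := by omega
        have hB : 0 < a' + 1 := by omega
        unfold Xor' Xor
        tauto

def Disj (x a : ℕ) : Prop := ∀ i, ¬(x.testBit i = true ∧ a.testBit i = true)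

lemma odd_choose_iff (x a : ℕ) : Odd ((x + a).choose x) ↔ Disj x a := by
  suffices H : ∀ n x a, x + a = n → (Odd ((x + a).choose x) ↔ Disj x a) from H _ x a rfl
  clear x a
  intro n
  induction n using Nat.strong_induction_on with
  | _ n ih =>
    intro x a hn
    rcases Nat.eq_zero_or_pos (x + a) with h0 | h1
    · obtain ⟨rfl, rfl⟩ : x = 0 ∧ a = 0 := by omega
      simp [Disj]
    · have hluc : (x + a).choose x ≡
          ((x + a) % 2).choose (x % 2) * ((x + a) / 2).choose (x / 2) [MOD 2] :=
        @Choose.choose_modEq_choose_mod_mul_choose_div_nat (x+a) x 2 ⟨Nat.prime_two⟩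
      have hodd : Odd ((x + a).choose x) ↔
          Odd (((x + a) % 2).choose (x % 2) * ((x + a) / 2).choose (x / 2)) := by
        rw [Nat.odd_iff, Nat.odd_iff, hluc]
      by_cases hb : x % 2 = 1 ∧ a % 2 = 1
      · have h2 : (x + a) % 2 = 0 := by omega
        have h3 : ((x + a) % 2).choose (x % 2) = 0 := by
          rw [h2, hb.1]; rfl
        rw [hodd, h3, Nat.zero_mul]
        simp only [Nat.odd_iff]
        constructor
        · intro h; exact absurd h (by norm_num)
        · intro h
          exact absurd (h 0) (by simp [Nat.testBit_zero, hb.1, hb.2])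
      · have h3 : ((x + a) % 2).choose (x % 2) = 1 := by
          have hx2 := Nat.mod_two_eq_zero_or_one x
          have ha2 := Nat.mod_two_eq_zero_or_one a
          have hxa2 := Nat.mod_two_eq_zero_or_one (x + a)
          rcases hx2 with h | h <;> rcases ha2 with h' | h'
          · rw [h, (by omega : (x + a) % 2 = 0)]; rfl
          · rw [h, (by omega : (x + a) % 2 = 1)]; rfl
          · rw [h, (by omega : (x + a) % 2 = 1)]; rfl
          · exact absurd ⟨h, h'⟩ hb
        have h4 : (x + a) / 2 = x / 2 + a / 2 := by omega
        rw [hodd, h3, Nat.one_mul, h4,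
          ih (x / 2 + a / 2) (by omega) (x / 2) (a / 2) rfl]
        constructor
        · intro h i
          match i with
          | 0 =>
            simp only [Nat.testBit_zero]
            rintro ⟨h5, h6⟩
            simp only [decide_eq_true_eq] at h5 h6
            exact hb ⟨h5, h6⟩
          | (i+1) =>
            rw [Nat.testBit_add_one, Nat.testBit_add_one]
            exact h i
        · intro h i
          rw [← Nat.testBit_add_one, ← Nat.testBit_add_one]
          exact h (i + 1)

lemma ulam_wordTwo (x a : ℕ) : IsUlam (wordTwo x a) ↔ Disj x a := by
  rw [ulam_wordTwo_choose, odd_choose_iff]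

-- ############ Part B: bit arithmetic ############

lemma modbit (x e : ℕ) : x % 2 ^ (e + 1) < 2 ^ e ↔ x.testBit e = false := by
  have h1 : x % (2 ^ e * 2) / 2 ^ e = x / 2 ^ e % 2 := Nat.mod_mul_right_div_self x (2^e) 2
  have hpos : 0 < (2:ℕ) ^ e := by positivity
  have hdm := Nat.div_add_mod (x % (2 ^ e * 2)) (2 ^ e)
  have hm : x % (2 ^ e * 2) % 2 ^ e < 2 ^ e := Nat.mod_lt _ hpos
  have h2 : (2:ℕ) ^ (e + 1) = 2 ^ e * 2 := by ring
  rw [Nat.testBit_eq_decide_div_mod_eq, h2, decide_eq_false_iff_not]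
  rw [h1] at hdm
  constructor
  · intro h
    have h4 : x % (2 ^ e * 2) / 2 ^ e = 0 := Nat.div_eq_of_lt h
    omega
  · intro h
    have h5 : x / 2 ^ e % 2 = 0 := by omega
    rw [h5, Nat.mul_zero] at hdm
    omega

lemma testBit_div_pow (z n j : ℕ) : (z / 2 ^ n).testBit j = z.testBit (n + j) := by
  rw [← Nat.shiftRight_eq_div_pow, Nat.testBit_shiftRight]

lemma disj_add_lt : ∀ (n u v : ℕ), Disj u v → u < 2 ^ n → v < 2 ^ n → u + v < 2 ^ n := by
  intro n
  induction n with
  | zero => intro u v _ hu hv; omega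
  | succ n ih =>
    intro u v hd hu hv
    have h0 : ¬(u % 2 = 1 ∧ v % 2 = 1) := by
      have := hd 0
      simpa [Nat.testBit_zero] using this
    have hdiv : Disj (u / 2) (v / 2) := by
      intro i hi
      exact hd (i + 1) (by rwa [Nat.testBit_add_one, Nat.testBit_add_one])
    have h1 : u / 2 + v / 2 < 2 ^ n := by
      apply ih _ _ hdiv <;> · rw [pow_succ] at *; omega
    rw [pow_succ] at *
    omega

lemma topbit_decomp {u e : ℕ} (hu : u < 2 ^ (e + 1)) :
    (u.testBit e = true ∧ u = 2 ^ e + u % 2 ^ e) ∨ (u.testBit e = false ∧ u < 2 ^ e) := by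
  have h2 : (2:ℕ) ^ (e+1) = 2 ^ e * 2 := by ring
  have hdm := Nat.div_add_mod u (2 ^ e)
  have hlt : u / 2 ^ e < 2 := by
    rw [h2] at hu
    exact Nat.div_lt_of_lt_mul (by omega)
  have hm : u % 2 ^ e < 2 ^ e := Nat.mod_lt _ (by positivity)
  rw [Nat.testBit_eq_decide_div_mod_eq]
  interval_cases h : u / 2 ^ e
  · right; simpa using by omega
  · left; simpa using by omega

lemma lemL : ∀ (e u v : ℕ), u < 2 ^ e → v < 2 ^ e →
    (u + v < 2 ^ e - 1 ↔ ∃ k, k < e ∧ u.testBit k = false ∧ v.testBit k = false ∧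
      ∀ i, k < i → i < e → ¬(u.testBit i = true ∧ v.testBit i = true)) := by
  intro e
  induction e with
  | zero =>
    intro u v hu hv
    constructor
    · intro h; omega
    · rintro ⟨k, hk, -⟩; omega
  | succ e ih =>
    intro u v hu hv
    have hmodu : u % 2 ^ e < 2 ^ e := Nat.mod_lt _ (by positivity)
    have hmodv : v % 2 ^ e < 2 ^ e := Nat.mod_lt _ (by positivity)
    have hmb : ∀ w i, i < e → (w % 2 ^ e).testBit i = w.testBit i := by
      intro w i hi
      simp [Nat.testBit_mod_two_pow, hi]
    have hpe : (2:ℕ) ^ (e+1) = 2 ^ e * 2 := by ring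
    rcases topbit_decomp hu with ⟨hue, hueq⟩ | ⟨hue, hult⟩ <;>
      rcases topbit_decomp hv with ⟨hve, hveq⟩ | ⟨hve, hvlt⟩
    · -- both top bits set : both sides false
      constructor
      · intro h
        exfalso
        rw [hpe] at h
        omega
      · rintro ⟨k, hk, hku, hkv, hcl⟩
        exfalso
        rcases Nat.lt_or_ge k e with hke | hke
        · exact hcl e hke (by omega) ⟨hue, hve⟩
        · have hkee : k = e := by omega
          rw [hkee, hue] at hku
          exact absurd hku (by simp)
    · -- u top set, v not
      have key : u + v < 2 ^ (e+1) - 1 ↔ u % 2 ^ e + v < 2 ^ e - 1 := by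
        rw [hpe]; omega
      rw [key, ih (u % 2 ^ e) v hmodu hvlt]
      constructor
      · rintro ⟨k, hk, hku, hkv, hcl⟩
        refine ⟨k, by omega, by rw [← hmb u k hk]; exact hku, hkv, ?_⟩
        intro i hki hie hand
        rcases Nat.lt_or_ge i e with hie2 | hie2
        · exact hcl i hki hie2 ⟨by rw [hmb u i hie2]; exact hand.1, hand.2⟩
        · have hiee : i = e := by omega
          rw [hiee, hve] at hand
          exact Bool.false_ne_true hand.2
      · rintro ⟨k, hk, hku, hkv, hcl⟩
        have hke : k < e := by
          rcases Nat.lt_or_ge k e with h | h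
          · exact h
          · exfalso
            have hkee : k = e := by omega
            rw [hkee, hue] at hku
            exact absurd hku (by simp)
        refine ⟨k, hke, by rw [hmb u k hke]; exact hku, hkv, ?_⟩
        intro i hki hie hand
        exact hcl i hki (by omega) ⟨by rw [← hmb u i hie]; exact hand.1, hand.2⟩
    · -- v top set, u not
      have key : u + v < 2 ^ (e+1) - 1 ↔ u + v % 2 ^ e < 2 ^ e - 1 := by
        rw [hpe]; omega
      rw [key, ih u (v % 2 ^ e) hult hmodv]
      constructor
      · rintro ⟨k, hk, hku, hkv, hcl⟩
        refine ⟨k, by omega, hku, by rw [← hmb v k hk]; exact hkv, ?_⟩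
        intro i hki hie hand
        rcases Nat.lt_or_ge i e with hie2 | hie2
        · exact hcl i hki hie2 ⟨hand.1, by rw [hmb v i hie2]; exact hand.2⟩
        · have hiee : i = e := by omega
          rw [hiee, hue] at hand
          exact Bool.false_ne_true hand.1
      · rintro ⟨k, hk, hku, hkv, hcl⟩
        have hke : k < e := by
          rcases Nat.lt_or_ge k e with h | h
          · exact h
          · exfalso
            have hkee : k = e := by omega
            rw [hkee, hve] at hkv
            exact absurd hkv (by simp)
        refine ⟨k, hke, hku, by rw [hmb v k hke]; exact hkv, ?_⟩
        intro i hki hie hand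
        exact hcl i hki (by omega) ⟨hand.1, by rw [← hmb v i hie]; exact hand.2⟩
    · -- neither top bit set
      constructor
      · intro _
        exact ⟨e, by omega, hue, hve, fun i hi hie => by omega⟩
      · intro _
        rw [hpe]
        omega

lemma pow_split (d k : ℕ) (hk : k < d) : 2 ^ (k+1) * 2 ^ (d-k-1) = 2 ^ d := by
  rw [← pow_add]
  congr 1
  omega

lemma A_lt (d k m : ℕ) (hk : k < d) (hm : m < 2 ^ (d-k-1)) :
    2 ^ (k+1) * m + 2 ^ k < 2 ^ d := by
  have h1 : 2 ^ (k+1) * (m + 1) ≤ 2 ^ (k+1) * 2 ^ (d-k-1) := by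
    apply Nat.mul_le_mul_left
    omega
  rw [pow_split d k hk] at h1
  have h2 : (2:ℕ) ^ k < 2 ^ (k+1) := by
    rw [pow_succ]
    have : 0 < (2:ℕ)^k := by positivity
    omega
  nlinarith [h1, h2]

lemma A_testBit (k m : ℕ) (i : ℕ) :
    (2 ^ (k+1) * m + 2 ^ k).testBit i =
      if i < k then false else if i = k then true else m.testBit (i - (k+1)) := by
  have hb : (2:ℕ) ^ k < 2 ^ (k+1) := by
    rw [pow_succ]
    have : 0 < (2:ℕ)^k := by positivity
    omega
  rw [Nat.testBit_two_pow_mul_add m hb i]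
  rcases Nat.lt_trichotomy i k with h | h | h
  · simp [h, (by omega : i < k + 1), Nat.testBit_two_pow_of_ne (by omega : k ≠ i)]
  · subst h
    simp [(by omega : i < i + 1), Nat.testBit_two_pow_self]
  · rw [if_neg (by omega : ¬ i < k + 1), if_neg (by omega : ¬ i < k), if_neg (by omega : ¬ i = k)]

lemma B_decomp (d k m : ℕ) (hk : k < d) (hm : m < 2 ^ (d-k-1)) :
    2 ^ d - (2 ^ (k+1) * m + 2 ^ k) = 2 ^ (k+1) * (2 ^ (d-k-1) - 1 - m) + 2 ^ k := by
  have h1 := pow_split d k hk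
  have h2 : 2 ^ (k+1) * (2 ^ (d-k-1) - 1 - m) = 2 ^ (k+1) * 2 ^ (d-k-1) - 2^(k+1) - 2 ^ (k+1) * m := by
    rw [Nat.mul_sub, Nat.mul_sub, Nat.mul_one]
  have h3 : 2 ^ (k+1) * (m+1) ≤ 2 ^ (k+1) * 2 ^ (d-k-1) := Nat.mul_le_mul_left _ (by omega)
  have h4 : (2:ℕ) ^ (k+1) = 2 ^ k * 2 := by ring
  rw [h2, h1]
  rw [Nat.mul_add, Nat.mul_one] at h3
  omega

lemma Bm_testBit (d k m : ℕ) (hk : k < d) (hm : m < 2 ^ (d-k-1)) (j : ℕ) :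
    (2 ^ (d-k-1) - 1 - m).testBit j = (decide (j < d-k-1) && !m.testBit j) := by
  have : 2 ^ (d-k-1) - 1 - m = 2 ^ (d-k-1) - (m + 1) := by omega
  rw [this, Nat.testBit_two_pow_sub_succ hm]

/-- the canonical element with lowest bit `k`, taking high bits from `z`. -/
def Ak (k z : ℕ) : ℕ := 2 ^ (k+1) * (z / 2 ^ (k+1)) + 2 ^ k

lemma Ak_mem (d x z k : ℕ) (hd : 1 ≤ d) (hx : x < 2 ^ d) (hz : z < 2 ^ d)
    (hk : k < d) (hxk : x.testBit k = false) (hzk : z.testBit k = false)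
    (hcl : ∀ i, k < i → i < d → ¬(x.testBit i = true ∧ z.testBit i = true)) :
    0 < Ak k z ∧ Ak k z < 2 ^ d ∧ Disj x (Ak k z) ∧ Disj (2 ^ d - Ak k z) z := by
  set m := z / 2 ^ (k+1) with hmdef
  have hm : m < 2 ^ (d-k-1) := by
    rw [hmdef]
    apply Nat.div_lt_of_lt_mul
    rw [pow_split d k hk]
    exact hz
  have hmbit : ∀ j, m.testBit j = z.testBit (k+1+j) := fun j => testBit_div_pow z (k+1) j
  have hAbit : ∀ i, (Ak k z).testBit i =
      if i < k then false else if i = k then true else z.testBit i := by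
    intro i
    rw [Ak, A_testBit]
    rcases Nat.lt_trichotomy i k with h | h | h
    · simp [h]
    · simp [h]
    · rw [if_neg (by omega), if_neg (by omega), if_neg (by omega), if_neg (by omega),
        hmbit (i - (k+1)), (by omega : k + 1 + (i - (k+1)) = i)]
  have hAlt : Ak k z < 2 ^ d := A_lt d k m hk hm
  have hApos : 0 < Ak k z := by
    have h9 : 0 < (2:ℕ)^k := by positivity
    exact lt_of_lt_of_le h9 (Nat.le_add_left _ _)
  have hBbit : ∀ i, (2 ^ d - Ak k z).testBit i =
      if i < k then false else if i = k then true
      else (decide (i < d) && !z.testBit i) := by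
    intro i
    rw [Ak, B_decomp d k m hk hm, A_testBit]
    rcases Nat.lt_trichotomy i k with h | h | h
    · simp [h]
    · simp [h]
    · rw [if_neg (by omega), if_neg (by omega), if_neg (by omega), if_neg (by omega),
        Bm_testBit d k m hk hm, hmbit (i - (k+1)), (by omega : k + 1 + (i - (k+1)) = i)]
      congr 1
      simp only [decide_eq_decide]
      omega
  refine ⟨hApos, hAlt, ?_, ?_⟩
  · rintro i ⟨hxi, hAi⟩
    rw [hAbit i] at hAi
    rcases Nat.lt_trichotomy i k with h | h | h
    · rw [if_pos h] at hAi; exact Bool.false_ne_true hAi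
    · subst h; rw [hxi] at hxk; exact Bool.false_ne_true hxk.symm
    · rw [if_neg (by omega), if_neg (by omega)] at hAi
      rcases Nat.lt_or_ge i d with hid | hid
      · exact hcl i h hid ⟨hxi, hAi⟩
      · have : x.testBit i = false :=
          Nat.testBit_lt_two_pow (lt_of_lt_of_le hx (Nat.pow_le_pow_right (by omega) hid))
        rw [this] at hxi; exact Bool.false_ne_true hxi
  · rintro i ⟨hBi, hzi⟩
    rw [hBbit i] at hBi
    rcases Nat.lt_trichotomy i k with h | h | h
    · rw [if_pos h] at hBi; exact Bool.false_ne_true hBi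
    · subst h; rw [hzi] at hzk; exact Bool.false_ne_true hzk.symm
    · rw [if_neg (by omega), if_neg (by omega), hzi] at hBi
      simp at hBi

lemma B_testBit (d k m : ℕ) (hk : k < d) (hm : m < 2 ^ (d-k-1)) (i : ℕ) :
    (2 ^ d - (2 ^ (k+1) * m + 2 ^ k)).testBit i =
      if i < k then false else if i = k then true
      else (decide (i < d) && !m.testBit (i - (k+1))) := by
  rw [B_decomp d k m hk hm, A_testBit]
  rcases Nat.lt_trichotomy i k with h | h | h
  · simp [h]
  · simp [h]
  · rw [if_neg (by omega), if_neg (by omega), if_neg (by omega), if_neg (by omega),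
      Bm_testBit d k m hk hm]
    congr 1
    simp only [decide_eq_decide]
    omega

lemma exists_lowbit {a : ℕ} (ha : 0 < a) :
    ∃ k, a.testBit k = true ∧ ∀ i, i < k → a.testBit i = false := by
  have hex : ∃ k, a.testBit k = true := by
    by_contra hc
    push_neg at hc
    have : a = 0 := Nat.eq_of_testBit_eq fun i => by
      rw [Nat.zero_testBit]
      exact Bool.eq_false_iff.mpr (hc i)
    omega
  exact ⟨Nat.find hex, Nat.find_spec hex,
    fun i hi => Bool.eq_false_iff.mpr (Nat.find_min hex hi)⟩

lemma low_decomp {a k : ℕ} (hbk : a.testBit k = true) (hlow : ∀ i, i < k → a.testBit i = false) :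
    a = 2 ^ (k+1) * (a / 2 ^ (k+1)) + 2 ^ k := by
  have hdm := (Nat.div_add_mod a (2 ^ (k+1))).symm
  have hmod : a % 2 ^ (k+1) = 2 ^ k := by
    apply Nat.eq_of_testBit_eq
    intro i
    rw [Nat.testBit_mod_two_pow, Nat.testBit_two_pow]
    rcases Nat.lt_trichotomy i k with h | h | h
    · rw [hlow i h]
      simp only [Bool.and_false]
      exact (decide_eq_false (by omega : ¬ k = i)).symm
    · subst h
      simp [hbk]
    · rw [decide_eq_false (by omega : ¬ i < k + 1)]
      simp only [Bool.false_and]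
      exact (decide_eq_false (by omega : ¬ k = i)).symm
  rw [hmod] at hdm
  exact hdm

lemma eIdx_eq (d x z : ℕ) : eIdx d x z =
    Nat.findGreatest (fun e => x % 2 ^ (e + 1) < 2 ^ e ∧ z % 2 ^ (e + 1) < 2 ^ e) (d - 1) := rfl


/-- `E1[d]` counts (in caveman style) representations
`w(x,2^d,z) = w(x,a) * w(2^d - a, z)` with `0 < a < 2^d`. -/
theorem E1_counts (d : ℕ) (hd : 1 ≤ d) (x z : ℕ) (hx : x < 2 ^ d) (hz : z < 2 ^ d) :
    min 2 {a : ℕ | 0 < a ∧ a < 2 ^ d ∧ IsUlam (wordTwo x a) ∧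
      IsUlam (wordTwo (2 ^ d - a) z)}.ncard = E1 d x z := by
  have hSeq : {a : ℕ | 0 < a ∧ a < 2 ^ d ∧ IsUlam (wordTwo x a) ∧
      IsUlam (wordTwo (2 ^ d - a) z)}
      = {a : ℕ | 0 < a ∧ a < 2 ^ d ∧ Disj x a ∧ Disj (2 ^ d - a) z} := by
    ext a
    simp only [Set.mem_setOf_eq, ulam_wordTwo]
  rw [hSeq]
  set T := {a : ℕ | 0 < a ∧ a < 2 ^ d ∧ Disj x a ∧ Disj (2 ^ d - a) z} with hTdef
  have hmem : ∀ a, a ∈ T ↔ 0 < a ∧ a < 2 ^ d ∧ Disj x a ∧ Disj (2 ^ d - a) z :=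
    fun a => Iff.rfl
  have hfin : T.Finite :=
    Set.Finite.subset (Set.finite_Iio (2 ^ d)) (fun a ha => ((hmem a).mp ha).2.1)
  by_cases hbig : 2 ^ d - 1 ≤ x + z
  · have hT : T = ∅ := by
      ext a
      simp only [Set.mem_empty_iff_false, iff_false]
      intro ha
      obtain ⟨ha0, ha1, hdx, hdz⟩ := (hmem a).mp ha
      have h1 : x + a < 2 ^ d := disj_add_lt d x a hdx hx ha1
      have h2 : (2 ^ d - a) + z < 2 ^ d := disj_add_lt d _ z hdz (by omega) hz
      omega
    rw [hT, E1, if_pos hbig]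
    simp
  · push_neg at hbig
    have hd1 : 0 < (2:ℕ) ^ d := by positivity
    obtain ⟨k₀, hk₀d, hxk₀, hzk₀, hcl₀⟩ := (lemL d x z hx hz).mp (by omega)
    have hP : ∀ j, (x % 2 ^ (j+1) < 2 ^ j ∧ z % 2 ^ (j+1) < 2 ^ j)
        ↔ (x.testBit j = false ∧ z.testBit j = false) :=
      fun j => and_congr (modbit x j) (modbit z j)
    have hPk₀ : x % 2 ^ (k₀+1) < 2 ^ k₀ ∧ z % 2 ^ (k₀+1) < 2 ^ k₀ := (hP k₀).mpr ⟨hxk₀, hzk₀⟩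
    have hPe : x % 2 ^ (eIdx d x z + 1) < 2 ^ eIdx d x z
        ∧ z % 2 ^ (eIdx d x z + 1) < 2 ^ eIdx d x z := by
      rw [eIdx_eq]
      exact Nat.findGreatest_spec
        (P := fun e => x % 2 ^ (e + 1) < 2 ^ e ∧ z % 2 ^ (e + 1) < 2 ^ e)
        (by omega : k₀ ≤ d - 1) hPk₀
    obtain ⟨hxe, hze⟩ := (hP (eIdx d x z)).mp hPe
    have hed : eIdx d x z ≤ d - 1 := by
      rw [eIdx_eq]
      exact Nat.findGreatest_le _
    have hed' : eIdx d x z < d := by omega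
    have hgr : ∀ j, eIdx d x z < j → j ≤ d - 1 →
        ¬(x.testBit j = false ∧ z.testBit j = false) := by
      intro j hj hj2 hc
      rw [eIdx_eq d x z] at hj
      exact Nat.findGreatest_is_greatest hj hj2 ((hP j).mpr hc)
    have hk₀e : k₀ ≤ eIdx d x z := by
      by_contra hgt
      rw [eIdx_eq d x z] at hgt
      have h9 : Nat.findGreatest
          (fun e => x % 2 ^ (e + 1) < 2 ^ e ∧ z % 2 ^ (e + 1) < 2 ^ e) (d - 1) < k₀ := by
        omega
      exact Nat.findGreatest_is_greatest h9 (by omega) hPk₀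
    have hclglob : ∀ i, eIdx d x z < i → i < d →
        ¬(x.testBit i = true ∧ z.testBit i = true) :=
      fun i h1 h2 => hcl₀ i (by omega) h2
    obtain ⟨hA0, hA1, hA2, hA3⟩ := Ak_mem d x z (eIdx d x z) hd hx hz hed' hxe hze hclglob
    have hAe : Ak (eIdx d x z) z ∈ T := (hmem _).mpr ⟨hA0, hA1, hA2, hA3⟩
    have hmodx : x % 2 ^ eIdx d x z < 2 ^ eIdx d x z := Nat.mod_lt _ (by positivity)
    have hmodz : z % 2 ^ eIdx d x z < 2 ^ eIdx d x z := Nat.mod_lt _ (by positivity)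
    have hmb : ∀ (w i : ℕ), i < eIdx d x z →
        (w % 2 ^ eIdx d x z).testBit i = w.testBit i := by
      intro w i hi
      simp [Nat.testBit_mod_two_pow, hi]
    rw [E1, if_neg (by omega)]
    by_cases hsmall : x % 2 ^ eIdx d x z + z % 2 ^ eIdx d x z < 2 ^ eIdx d x z - 1
    · rw [if_pos hsmall]
      obtain ⟨k₁, hk₁e, hxk₁, hzk₁, hcl₁⟩ :=
        (lemL (eIdx d x z) (x % 2 ^ eIdx d x z) (z % 2 ^ eIdx d x z) hmodx hmodz).mp hsmall
      rw [hmb x k₁ hk₁e] at hxk₁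
      rw [hmb z k₁ hk₁e] at hzk₁
      have hcl₁' : ∀ i, k₁ < i → i < d → ¬(x.testBit i = true ∧ z.testBit i = true) := by
        intro i h1 h2 hc
        rcases Nat.lt_trichotomy i (eIdx d x z) with h3 | h3 | h3
        · exact hcl₁ i h1 h3 ⟨by rw [hmb x i h3]; exact hc.1, by rw [hmb z i h3]; exact hc.2⟩
        · subst h3; rw [hc.1] at hxe; exact Bool.false_ne_true hxe.symm
        · exact hclglob i h3 h2 hc
      obtain ⟨hB0, hB1, hB2, hB3⟩ :=
        Ak_mem d x z k₁ hd hx hz (by omega) hxk₁ hzk₁ hcl₁'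
      have hBe : Ak k₁ z ∈ T := (hmem _).mpr ⟨hB0, hB1, hB2, hB3⟩
      have hne : Ak k₁ z ≠ Ak (eIdx d x z) z := by
        intro hc
        have h1 : (Ak k₁ z).testBit k₁ = true := by
          rw [Ak, A_testBit]
          simp
        have h2 : (Ak (eIdx d x z) z).testBit k₁ = false := by
          rw [Ak, A_testBit, if_pos hk₁e]
        rw [hc, h2] at h1
        exact Bool.false_ne_true h1
      have h2le : 1 < T.ncard := (Set.one_lt_ncard hfin).mpr ⟨_, hBe, _, hAe, hne⟩
      omega
    · rw [if_neg hsmall]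
      have huniq : ∀ a ∈ T, a = Ak (eIdx d x z) z := by
        intro a ha
        obtain ⟨ha0, ha1, hdx, hdz⟩ := (hmem a).mp ha
        obtain ⟨k, hbk, hlow⟩ := exists_lowbit ha0
        have hkd : k < d := by
          have h1 : 2 ^ k ≤ a := Nat.ge_two_pow_of_testBit hbk
          by_contra hc
          have : 2 ^ d ≤ 2 ^ k := Nat.pow_le_pow_right (by omega) (by omega)
          omega
        set m := a / 2 ^ (k+1) with hmdef
        have hdecomp : a = 2 ^ (k+1) * m + 2 ^ k := low_decomp hbk hlow
        have hm : m < 2 ^ (d-k-1) := by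
          rw [hmdef]
          apply Nat.div_lt_of_lt_mul
          rw [pow_split d k hkd]
          exact ha1
        have hab : ∀ i, a.testBit i = if i < k then false else if i = k then true
            else m.testBit (i - (k+1)) := by
          intro i
          conv_lhs => rw [hdecomp]
          exact A_testBit k m i
        have hbb : ∀ i, (2 ^ d - a).testBit i = if i < k then false else if i = k then true
            else (decide (i < d) && !m.testBit (i - (k+1))) := by
          intro i
          conv_lhs => rw [hdecomp]
          exact B_testBit d k m hkd hm i
        have hxk : x.testBit k = false := by
          by_contra hc
          exact hdx k ⟨Bool.not_eq_false _ ▸ (by simpa using hc),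
            by rw [hab k]; simp⟩
        have hzk : z.testBit k = false := by
          by_contra hc
          exact hdz k ⟨by rw [hbb k]; simp, by simpa using hc⟩
        have hclk : ∀ i, k < i → i < d → ¬(x.testBit i = true ∧ z.testBit i = true) := by
          rintro i h1 h2 ⟨hx1, hz1⟩
          have ha1' : a.testBit i = false := by
            by_contra hc
            exact hdx i ⟨hx1, by simpa using hc⟩
          rw [hab i, if_neg (by omega), if_neg (by omega)] at ha1'
          have hb1 : (2 ^ d - a).testBit i = true := by
            rw [hbb i, if_neg (by omega), if_neg (by omega), ha1']
            simp [h2]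
          exact hdz i ⟨hb1, hz1⟩
        have hPkk : x % 2 ^ (k+1) < 2 ^ k ∧ z % 2 ^ (k+1) < 2 ^ k := (hP k).mpr ⟨hxk, hzk⟩
        have hke : k ≤ eIdx d x z := by
          by_contra hgt
          rw [eIdx_eq d x z] at hgt
          have h9 : Nat.findGreatest
              (fun e => x % 2 ^ (e + 1) < 2 ^ e ∧ z % 2 ^ (e + 1) < 2 ^ e) (d - 1) < k := by
            omega
          exact Nat.findGreatest_is_greatest h9 (by omega) hPkk
        have hkeq : k = eIdx d x z := by
          rcases Nat.lt_or_ge k (eIdx d x z) with hlt | hge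
          · exfalso
            apply hsmall
            apply (lemL (eIdx d x z) (x % 2 ^ eIdx d x z) (z % 2 ^ eIdx d x z) hmodx hmodz).mpr
            refine ⟨k, hlt, by rw [hmb x k hlt]; exact hxk, by rw [hmb z k hlt]; exact hzk, ?_⟩
            intro i h1 h2 hc
            exact hclk i h1 (by omega)
              ⟨by rw [← hmb x i h2]; exact hc.1, by rw [← hmb z i h2]; exact hc.2⟩
          · omega
        rw [← hkeq]
        apply Nat.eq_of_testBit_eq
        intro i
        have hAkbit : (Ak k z).testBit i = if i < k then false else if i = k then true
            else z.testBit i := by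
          rw [Ak, A_testBit]
          rcases Nat.lt_trichotomy i k with h | h | h
          · simp [h]
          · simp [h]
          · rw [if_neg (by omega), if_neg (by omega), if_neg (by omega), if_neg (by omega),
              testBit_div_pow z (k+1) (i - (k+1)), (by omega : k + 1 + (i - (k+1)) = i)]
        rw [hAkbit, hab i]
        rcases Nat.lt_trichotomy i k with h | h | h
        · simp only [if_pos h]
        · simp only [if_neg (by omega : ¬ i < k), if_pos h]
        · rw [if_neg (by omega), if_neg (by omega), if_neg (by omega), if_neg (by omega)]
          rcases Nat.lt_or_ge i d with hid | hid
          · rcases Bool.eq_false_or_eq_true (z.testBit i) with hzi | hzi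
            swap
            · -- z bit false: x bit must be true, so a bit false
              have hxi : x.testBit i = true := by
                have := hgr i (by omega) (by omega)
                rcases Bool.eq_false_or_eq_true (x.testBit i) with h1 | h1
                · exact h1
                · exact absurd ⟨h1, hzi⟩ this
              have hai : a.testBit i = false := by
                by_contra hc
                exact hdx i ⟨hxi, by simpa using hc⟩
              rw [hab i, if_neg (by omega), if_neg (by omega)] at hai
              rw [hai, hzi]
            · -- z bit true: b bit must be false, so m bit true
              have hbi : (2 ^ d - a).testBit i = false := by
                by_contra hc
                exact hdz i ⟨by simpa using hc, hzi⟩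
              rw [hbb i, if_neg (by omega), if_neg (by omega)] at hbi
              have h8 : decide (i < d) = true := decide_eq_true hid
              rw [h8, Bool.true_and] at hbi
              have h9 : m.testBit (i - (k+1)) = true := by
                rcases Bool.eq_false_or_eq_true (m.testBit (i - (k+1))) with h9 | h9
                · exact h9
                · rw [h9] at hbi
                  simp at hbi
              rw [h9, hzi]
          · have h1 : m.testBit (i - (k+1)) = false := by
              apply Nat.testBit_lt_two_pow
              calc m < 2 ^ (d-k-1) := hm
                _ ≤ 2 ^ (i - (k+1)) := Nat.pow_le_pow_right (by omega) (by omega)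
            have h2 : z.testBit i = false :=
              Nat.testBit_lt_two_pow (lt_of_lt_of_le hz (Nat.pow_le_pow_right (by omega) hid))
            rw [h1, h2]
      have hTs : T = {Ak (eIdx d x z) z} := Set.eq_singleton_iff_unique_mem.mpr ⟨hAe, huniq⟩
      rw [hTs, Set.ncard_singleton]
      omega
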